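/- arXiv:1410.4236 — 2 statements merged into one kernel-verified Lean document; each statement's English description precedes it below -/
import Mathlib

section
/- Theorem 1: Let (λ*, θ*, μ*, P*_G) be a fixed point of the distributed DC-OPF algorithm, i.e. a point left unchanged by every one of the simultaneous updates. Then it satisfies the first-order optimality conditions of the DC-OPF problem; namely: (a) for every bus i and generator n ∈ Ω_{G_i}, P̲_{G_n} ≤ P*_{G_n} ≤ P̄_{G_n} and there exist μ_n⁺ ≥ 0, μ_n⁻ ≥ 0 with 2a_n P*_{G_n} + b_n − λ*_i + μ_n⁺ − μ_n⁻ = 0, μ_n⁺(P*_{G_n} − P̄_{G_n}) = 0 and μ_n⁻(P̲_{G_n} − P*_{G_n}) = 0; (b) for every bus i, λ*_i Σ_{j∈Ω_i} 1/X_{ij} − Σ_{j∈Ω_i} λ*_j/X_{ij} + Σ_{j∈Ω_i} (μ*_{ij} − μ*_{ji})/X_{ij} = 0; (c) for every bus i, Σ_{n∈Ω_{G_i}} P*_{G_n} − P_{L_i} = Σ_{j∈Ω_i} (θ*_i − θ*_j)/X_{ij}; (d) for every line ij ∈ Ω_L, μ*_{ij} ≥ 0, μ*_{ji} ≥ 0,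 (θ*_i − θ*_j)/X_{ij} ≤ P̄_{ij}, −(θ*_i − θ*_j)/X_{ij} ≤ P̄_{ij}, μ*_{ij}·((θ*_i − θ*_j)/X_{ij} − P̄_{ij}) = 0 and μ*_{ji}·(−(θ*_i − θ*_j)/X_{ij} − P̄_{ij}) = 0. (The slack-bus normalization θ_1 = 0 can then be achieved by subtracting θ*_1 from every angle, which leaves all the above conditions unchanged.) -/
open Finset

lemma mu_aux (δ m P f : ℝ) (hδ : 0 < δ) (h : m = max 0 (m - δ * (P - f))) :
    0 ≤ m ∧ f ≤ P ∧ m * (f - P) = 0 := by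
  rcases max_cases 0 (m - δ * (P - f)) with ⟨h1, h2⟩ | ⟨h1, h2⟩
  · have hm : m = 0 := by linarith [h.trans h1]
    have hfP : f ≤ P := by
      rw [hm] at h2
      nlinarith
    exact ⟨le_of_eq hm.symm, hfP, by rw [hm]; ring⟩
  · have hPf : P = f := by
      have := h.trans h1
      have : δ * (P - f) = 0 := by linarith
      have := hδ.ne'
      nlinarith
    refine ⟨by linarith [h.trans h1], le_of_eq hPf.symm, ?_⟩
    rw [hPf]; ring

/-- Theorem 1: any fixed point `(λ*, θ*, μ*, P*_G)` of the simultaneous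
updates of the distributed DC-OPF algorithm satisfies the first-order
optimality conditions of the DC-OPF problem: (a) generator stationarity,
feasibility of the generation limits, and complementary slackness of their
multipliers; (b) the coupling between the Lagrange multipliers; (c) the
power-balance equations; (d) nonnegativity of the line multipliers,
feasibility of the line-flow limits, and complementary slackness. -/
theorem fixed_point_satisfies_KKT
    (N : ℕ) (α β γ δ : ℝ) (hα : 0 < α) (hβ : 0 < β) (hγ : 0 < γ) (hδ : 0 < δ)
    -- network data
    (Ω : Fin N → Finset (Fin N)) (hΩ : ∀ i j, j ∈ Ω i → i ∈ Ω j)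
    (X : Fin N → Fin N → ℝ) (hXsymm : ∀ i j, X i j = X j i)
    (hXpos : ∀ i j, j ∈ Ω i → 0 < X i j)
    (Pbar : Fin N → Fin N → ℝ) (hPbarsymm : ∀ i j, Pbar i j = Pbar j i)
    (hPbarpos : ∀ i j, j ∈ Ω i → 0 < Pbar i j)
    (PL : Fin N → ℝ)
    -- generator data
    (G : Fin N → Finset ℕ) (a b Plow Pup : ℕ → ℝ)
    (ha : ∀ i, ∀ n ∈ G i, 0 < a n) (hlim : ∀ i, ∀ n ∈ G i, Plow n ≤ Pup n)
    -- the fixed point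
    (lam θ : Fin N → ℝ) (μ : Fin N → Fin N → ℝ) (PG : ℕ → ℝ)
    (hfixLam : ∀ i, lam i = lam i
        - β * (lam i * (∑ j ∈ Ω i, 1 / X i j) - (∑ j ∈ Ω i, lam j / X i j)
            + ∑ j ∈ Ω i, (μ i j - μ j i) / X i j)
        - α * ((∑ n ∈ G i, PG n) - PL i - ∑ j ∈ Ω i, (θ i - θ j) / X i j))
    (hfixPG : ∀ i, ∀ n ∈ G i,
        PG n = max (Plow n) (min (Pup n) ((lam i - b n) / (2 * a n))))
    (hfixTheta : ∀ i, θ i = θ i - γ * (-(∑ n ∈ G i, PG n) + PL i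
        + ∑ j ∈ Ω i, (θ i - θ j) / X i j))
    (hfixMu : ∀ i, ∀ j ∈ Ω i,
        μ i j = max 0 (μ i j - δ * (Pbar i j - (θ i - θ j) / X i j))) :
    -- (a) generator stationarity, feasibility and complementary slackness
    (∀ i, ∀ n ∈ G i, Plow n ≤ PG n ∧ PG n ≤ Pup n ∧
        ∃ μp μm : ℝ, 0 ≤ μp ∧ 0 ≤ μm ∧
          2 * a n * PG n + b n - lam i + μp - μm = 0 ∧
          μp * (PG n - Pup n) = 0 ∧ μm * (Plow n - PG n) = 0) ∧
    -- (b) multiplier coupling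
    (∀ i, lam i * (∑ j ∈ Ω i, 1 / X i j) - (∑ j ∈ Ω i, lam j / X i j)
        + (∑ j ∈ Ω i, (μ i j - μ j i) / X i j) = 0) ∧
    -- (c) power balance
    (∀ i, (∑ n ∈ G i, PG n) - PL i = ∑ j ∈ Ω i, (θ i - θ j) / X i j) ∧
    -- (d) line multipliers and line-flow limits
    (∀ i, ∀ j ∈ Ω i, 0 ≤ μ i j ∧ 0 ≤ μ j i ∧
        (θ i - θ j) / X i j ≤ Pbar i j ∧ -((θ i - θ j) / X i j) ≤ Pbar i j ∧
        μ i j * ((θ i - θ j) / X i j - Pbar i j) = 0 ∧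
        μ j i * (-((θ i - θ j) / X i j) - Pbar i j) = 0) := by

  -- (c) power balance
  have hc : ∀ i, (∑ n ∈ G i, PG n) - PL i = ∑ j ∈ Ω i, (θ i - θ j) / X i j := by
    intro i
    have h := hfixTheta i
    have hγ' := hγ.ne'
    have : γ * (-(∑ n ∈ G i, PG n) + PL i + ∑ j ∈ Ω i, (θ i - θ j) / X i j) = 0 := by
      linarith
    have := mul_eq_zero.mp this
    rcases this with h0 | h0
    · exact absurd h0 hγ'
    · linarith
  refine ⟨?_, ?_, hc, ?_⟩
  · -- (a)
    intro i n hn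
    have hPG := hfixPG i n hn
    have han := ha i n hn
    have hl := hlim i n hn
    set t := (lam i - b n) / (2 * a n) with ht
    have hfeas1 : Plow n ≤ PG n := by rw [hPG]; exact le_max_left _ _
    have hfeas2 : PG n ≤ Pup n := by
      rw [hPG]; exact max_le hl (min_le_left _ _)
    set s := lam i - b n - 2 * a n * PG n with hs
    refine ⟨hfeas1, hfeas2, max 0 s, max 0 (-s), le_max_left _ _, le_max_left _ _, ?_, ?_, ?_⟩
    · rcases le_total s 0 with h0 | h0
      · rw [max_eq_left h0, max_eq_right (by linarith)]; simp [hs]; ring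
      · rw [max_eq_right h0, max_eq_left (by linarith)]; simp [hs]; ring
    · rcases le_or_gt s 0 with h0 | h0
      · rw [max_eq_left h0]; ring
      · -- s > 0 ⇒ t > PG n ⇒ PG n = Pup n
        have htP : PG n < t := by
          rw [ht]
          rw [lt_div_iff₀ (by linarith)]
          nlinarith
        have hup : PG n = Pup n := by
          rcases le_or_gt t (Pup n) with h1 | h1
          · exfalso
            have : min (Pup n) t = t := min_eq_right h1
            rw [this] at hPG
            have : t ≤ PG n := hPG ▸ le_max_right _ _
            linarith
          · have : min (Pup n) t = Pup n := min_eq_left h1.le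
            rw [this, max_eq_right hl] at hPG
            exact hPG
        rw [hup]; ring
    · rcases le_or_gt 0 s with h0 | h0
      · rw [max_eq_left (by linarith)]; ring
      · have htP : t < PG n := by
          rw [ht, div_lt_iff₀ (by linarith)]
          nlinarith
        have hlow : PG n = Plow n := by
          have hmin : min (Pup n) t ≤ t := min_le_right _ _
          rcases max_cases (Plow n) (min (Pup n) t) with ⟨h1, h2⟩ | ⟨h1, h2⟩
          · exact hPG.trans h1
          · exfalso
            have := hPG.trans h1
            linarith [this ▸ hmin]
        rw [hlow]; ring
  · -- (b)
    intro i
    have h := hfixLam i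
    have hA := hc i
    have hβ' := hβ.ne'
    have : β * (lam i * (∑ j ∈ Ω i, 1 / X i j) - (∑ j ∈ Ω i, lam j / X i j)
        + ∑ j ∈ Ω i, (μ i j - μ j i) / X i j) = 0 := by
      nlinarith [h, hA]
    rcases mul_eq_zero.mp this with h0 | h0
    · exact absurd h0 hβ'
    · exact h0
  · -- (d)
    intro i j hj
    have hij := mu_aux δ (μ i j) (Pbar i j) ((θ i - θ j) / X i j) hδ (hfixMu i j hj)
    have hji' := hfixMu j i (hΩ i j hj)
    have hflip : (θ j - θ i) / X j i = -((θ i - θ j) / X i j) := by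
      rw [← hXsymm i j]; ring
    rw [hflip, hPbarsymm j i] at hji'
    have hji := mu_aux δ (μ j i) (Pbar i j) (-((θ i - θ j) / X i j)) hδ hji'
    obtain ⟨h1, h2, h3⟩ := hij
    obtain ⟨h4, h5, h6⟩ := hji
    exact ⟨h1, h4, h2, h5, by linarith [h3] <;> nlinarith, by linarith [h6]⟩
end

section
/- Theorem 2: Suppose the DC-OPF problem admits a strictly feasible point (one satisfying the power-balance equations and slack-bus condition, with all generation limits and all line-flow limits holding with strict inequality), and suppose (λ*, θ*, μ*, P*_G) is a fixed point of the distributed DC-OPF algorithm. Then the primal variables (P*_G, θ* − θ*_1·𝟙), i.e. the fixed-point generator outputs together with the fixed-point angles shifted so that the slack-bus angle is zero, constitute an optimal solution of the DC-OPF problem: they are feasible, and the total generation cost Σ_{n∈Ω_G} (a_n (P*_{G_n})² + b_n P*_{G_n} + c_n) is less than or equal to the total generation cost of every feasible point. -/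
open Finset

/-- Feasibility for the DC-OPF problem: power balance at every bus, the
slack-bus condition `θ₁ = 0`, the generation limits, and the line-flow
limits. Buses are indexed by `Fin (N+1)` with slack bus `0`. -/
def DCOPF.Feasible (N : ℕ)
    (Ω : Fin (N + 1) → Finset (Fin (N + 1)))
    (X Pbar : Fin (N + 1) → Fin (N + 1) → ℝ)
    (PL : Fin (N + 1) → ℝ)
    (G : Fin (N + 1) → Finset ℕ) (Plow Pup : ℕ → ℝ)
    (PG : ℕ → ℝ) (θ : Fin (N + 1) → ℝ) : Prop :=
  (∀ i, (∑ n ∈ G i, PG n) - PL i = ∑ j ∈ Ω i, (θ i - θ j) / X i j) ∧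
  θ 0 = 0 ∧
  (∀ i, ∀ n ∈ G i, Plow n ≤ PG n ∧ PG n ≤ Pup n) ∧
  (∀ i, ∀ j ∈ Ω i, -(Pbar i j) ≤ (θ i - θ j) / X i j ∧
      (θ i - θ j) / X i j ≤ Pbar i j)

/-- Strict feasibility: feasibility with all generation limits and all
line-flow limits holding with strict inequality. -/
def DCOPF.StrictFeasible (N : ℕ)
    (Ω : Fin (N + 1) → Finset (Fin (N + 1)))
    (X Pbar : Fin (N + 1) → Fin (N + 1) → ℝ)
    (PL : Fin (N + 1) → ℝ)
    (G : Fin (N + 1) → Finset ℕ) (Plow Pup : ℕ → ℝ)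
    (PG : ℕ → ℝ) (θ : Fin (N + 1) → ℝ) : Prop :=
  (∀ i, (∑ n ∈ G i, PG n) - PL i = ∑ j ∈ Ω i, (θ i - θ j) / X i j) ∧
  θ 0 = 0 ∧
  (∀ i, ∀ n ∈ G i, Plow n < PG n ∧ PG n < Pup n) ∧
  (∀ i, ∀ j ∈ Ω i, -(Pbar i j) < (θ i - θ j) / X i j ∧
      (θ i - θ j) / X i j < Pbar i j)

/-- Total generation cost: the sum over all buses of the quadratic costs of
the generators located at that bus. -/
def DCOPF.cost (N : ℕ) (G : Fin (N + 1) → Finset ℕ) (a b c : ℕ → ℝ)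
    (PG : ℕ → ℝ) : ℝ :=
  ∑ i, ∑ n ∈ G i, (a n * PG n ^ 2 + b n * PG n + c n)

/-!
At a fixed point every update is stationary. The `θ`-update forces power balance; the `μ`-update
gives `μ ≥ 0`, the line limits and complementary slackness; the `P_G`-update says that each output
minimises `a P² + b P − λ_i P` over its limits; and the `λ`-update, once balance holds, is
stationarity of the Lagrangian in `θ`. These KKT conditions suffice for the convex problem: for a
feasible `(P'_G, θ')` the cost gap dominates `∑ λ_i Δ(net injection)_i`, which summation by parts
over the symmetric network turns into `∑ μ_ij (P̄_ij − flow'_ij) ≥ 0`.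
-/

theorem eq_zero_of_eq_sub_mul {R : Type*} [Ring R] [NoZeroDivisors R] {x c y : R}
    (hc : c ≠ 0) (h : x = x - c * y) : y = 0 :=
  (mul_eq_zero.mp (sub_eq_self.mp h.symm)).resolve_left hc

theorem complementary_of_eq_max_zero_sub {μ δ s : ℝ} (hδ : 0 < δ)
    (h : μ = max 0 (μ - δ * s)) : 0 ≤ μ ∧ 0 ≤ s ∧ μ * s = 0 := by
  have hμ : 0 ≤ μ := (le_max_left _ _).trans_eq h.symm
  have hs : 0 ≤ s := by
    have : μ - δ * s ≤ μ := (le_max_right _ _).trans_eq h.symm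
    exact nonneg_of_mul_nonneg_right (by linarith) hδ
  refine ⟨hμ, hs, ?_⟩
  rcases max_choice 0 (μ - δ * s) with hmax | hmax
  · rw [hmax] at h
    rw [h, zero_mul]
  · rw [hmax] at h
    rw [eq_zero_of_eq_sub_mul hδ.ne' h, mul_zero]

theorem sq_sub_max_min_le {lo hi m x : ℝ} (hlo : lo ≤ x) (hhi : x ≤ hi) :
    (max lo (min hi m) - m) ^ 2 ≤ (x - m) ^ 2 := by
  simp only [max_def, min_def]
  split_ifs <;> nlinarith

theorem quadratic_le_of_eq_max_min {A B L lo hi p x : ℝ} (hA : 0 < A)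
    (hp : p = max lo (min hi ((L - B) / (2 * A)))) (hlo : lo ≤ x) (hhi : x ≤ hi) :
    A * p ^ 2 + B * p - L * p ≤ A * x ^ 2 + B * x - L * x := by
  set m := (L - B) / (2 * A)
  have hm : L - B = 2 * A * m := by
    simp only [m]
    field_simp
  have hdist := sq_sub_max_min_le (m := m) hlo hhi
  rw [← hp] at hdist
  have hgap : A * p ^ 2 + B * p - L * p - (A * x ^ 2 + B * x - L * x)
      = A * ((p - m) ^ 2 - (x - m) ^ 2) := by
    linear_combination (x - p) * hm
  linarith [mul_le_mul_of_nonneg_left hdist hA.le]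

theorem sum_sum_mul_sub_div_eq {ι 𝕜 : Type*} [Fintype ι] [Field 𝕜] {Ω : ι → Finset ι}
    (hΩ : ∀ i j, j ∈ Ω i → i ∈ Ω j) {X : ι → ι → 𝕜} (hX : ∀ i j, X i j = X j i)
    (w : ι → ι → 𝕜) (ψ : ι → 𝕜) :
    ∑ i, ∑ j ∈ Ω i, w i j * ((ψ i - ψ j) / X i j) =
      ∑ i, ψ i * ∑ j ∈ Ω i, (w i j - w j i) / X i j := by
  have hswap : ∑ i, ∑ j ∈ Ω i, w i j * ψ j / X i j = ∑ i, ∑ j ∈ Ω i, w j i * ψ i / X i j :=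
    (sum_comm' fun i j => by simpa using ⟨hΩ i j, hΩ j i⟩).trans
      (sum_congr rfl fun i _ => sum_congr rfl fun j _ => by rw [hX j i])
  calc ∑ i, ∑ j ∈ Ω i, w i j * ((ψ i - ψ j) / X i j)
      = ∑ i, ∑ j ∈ Ω i, w i j * ψ i / X i j - ∑ i, ∑ j ∈ Ω i, w i j * ψ j / X i j := by
        simp only [← sum_sub_distrib]
        exact sum_congr rfl fun i _ => sum_congr rfl fun j _ => by ring
    _ = ∑ i, ψ i * ∑ j ∈ Ω i, (w i j - w j i) / X i j := by
        simp only [hswap, ← sum_sub_distrib, mul_sum]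
        exact sum_congr rfl fun i _ => sum_congr rfl fun j _ => by ring

namespace DCOPF

variable {N : ℕ} {Ω : Fin (N + 1) → Finset (Fin (N + 1))} {X Pbar : Fin (N + 1) → Fin (N + 1) → ℝ}
  {PL : Fin (N + 1) → ℝ} {G : Fin (N + 1) → Finset ℕ} {Plow Pup : ℕ → ℝ}

theorem feasible_sub_apply_zero (hΩ : ∀ i j, j ∈ Ω i → i ∈ Ω j) (hXsymm : ∀ i j, X i j = X j i)
    (hPbarsymm : ∀ i j, Pbar i j = Pbar j i) {PG : ℕ → ℝ} {θ : Fin (N + 1) → ℝ}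
    (hbal : ∀ i, (∑ n ∈ G i, PG n) - PL i = ∑ j ∈ Ω i, (θ i - θ j) / X i j)
    (hPG : ∀ i, ∀ n ∈ G i, Plow n ≤ PG n ∧ PG n ≤ Pup n)
    (hflow : ∀ i, ∀ j ∈ Ω i, (θ i - θ j) / X i j ≤ Pbar i j) :
    Feasible N Ω X Pbar PL G Plow Pup PG (fun i => θ i - θ 0) := by
  simp only [Feasible, sub_sub_sub_cancel_right, sub_self]
  refine ⟨hbal, trivial, hPG, fun i j hj => ⟨?_, hflow i j hj⟩⟩
  have hji := hflow j i (hΩ i j hj)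
  rw [← hXsymm, ← hPbarsymm, ← neg_sub, neg_div] at hji
  linarith

theorem sum_mul_sub_le_cost_sub {a b : ℕ → ℝ} (c : ℕ → ℝ) (ha : ∀ i, ∀ n ∈ G i, 0 < a n)
    {lam : Fin (N + 1) → ℝ} {PG PG' : ℕ → ℝ}
    (hPG : ∀ i, ∀ n ∈ G i, PG n = max (Plow n) (min (Pup n) ((lam i - b n) / (2 * a n))))
    (hPG' : ∀ i, ∀ n ∈ G i, Plow n ≤ PG' n ∧ PG' n ≤ Pup n) :
    ∑ i, lam i * ((∑ n ∈ G i, PG' n) - ∑ n ∈ G i, PG n) ≤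
      cost N G a b c PG' - cost N G a b c PG := by
  simp only [cost, ← sum_sub_distrib, mul_sum]
  refine sum_le_sum fun i _ => sum_le_sum fun n hn => ?_
  have := quadratic_le_of_eq_max_min (ha i n hn) (hPG i n hn) (hPG' i n hn).1 (hPG' i n hn).2
  linarith

theorem cost_le_of_kkt (hΩ : ∀ i j, j ∈ Ω i → i ∈ Ω j) (hXsymm : ∀ i j, X i j = X j i)
    {a b : ℕ → ℝ} (c : ℕ → ℝ) (ha : ∀ i, ∀ n ∈ G i, 0 < a n)
    {lam θ : Fin (N + 1) → ℝ} {μ : Fin (N + 1) → Fin (N + 1) → ℝ} {PG : ℕ → ℝ}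
    (hbal : ∀ i, (∑ n ∈ G i, PG n) - PL i = ∑ j ∈ Ω i, (θ i - θ j) / X i j)
    (hPG : ∀ i, ∀ n ∈ G i, PG n = max (Plow n) (min (Pup n) ((lam i - b n) / (2 * a n))))
    (hμ : ∀ i, ∀ j ∈ Ω i, 0 ≤ μ i j)
    (hslack : ∀ i, ∀ j ∈ Ω i, μ i j * (Pbar i j - (θ i - θ j) / X i j) = 0)
    (hstat : ∀ i, ∑ j ∈ Ω i, (lam i - lam j + (μ i j - μ j i)) / X i j = 0)
    {PG' : ℕ → ℝ} {θ' : Fin (N + 1) → ℝ} (hfeas : Feasible N Ω X Pbar PL G Plow Pup PG' θ') :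
    cost N G a b c PG ≤ cost N G a b c PG' := by
  obtain ⟨hbal', -, hPG', hflow'⟩ := hfeas
  -- summation by parts against stationarity: `∑ λ_i Δ(net injection)_i = -∑ μ_ij Δflow_ij`
  have hdual := sum_sum_mul_sub_div_eq hΩ hXsymm (fun i j => lam i + μ i j) (θ' - θ)
  simp only [Pi.sub_apply, add_sub_add_comm, hstat, mul_zero, sum_const_zero, add_mul,
    sum_add_distrib, ← mul_sum] at hdual
  have hedge : ∀ i, ∀ j ∈ Ω i, μ i j * ((θ' i - θ i - (θ' j - θ j)) / X i j) ≤ 0 :=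
    fun i j hj => by
      rw [sub_sub_sub_comm, sub_div]
      nlinarith [hslack i j hj, hμ i j hj, (hflow' i j hj).2]
  have hbal_sub : ∀ i, (∑ n ∈ G i, PG' n) - ∑ n ∈ G i, PG n
      = ∑ j ∈ Ω i, (θ' i - θ i - (θ' j - θ j)) / X i j := fun i => by
    rw [← sub_sub_sub_cancel_right _ _ (PL i), hbal, hbal', ← sum_sub_distrib]
    exact sum_congr rfl fun j _ => by ring
  have hgain : 0 ≤ ∑ i, lam i * ((∑ n ∈ G i, PG' n) - ∑ n ∈ G i, PG n) := by
    simp only [hbal_sub]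
    linarith [sum_nonpos fun i (_ : i ∈ univ) => sum_nonpos (hedge i)]
  linarith [sum_mul_sub_le_cost_sub c ha hPG hPG']

end DCOPF

theorem fixed_point_is_optimal_general
    (N : ℕ) (α β γ δ : ℝ) (hβ : 0 < β) (hγ : 0 < γ) (hδ : 0 < δ)
    -- network data
    (Ω : Fin (N + 1) → Finset (Fin (N + 1))) (hΩ : ∀ i j, j ∈ Ω i → i ∈ Ω j)
    (X : Fin (N + 1) → Fin (N + 1) → ℝ) (hXsymm : ∀ i j, X i j = X j i)
    (Pbar : Fin (N + 1) → Fin (N + 1) → ℝ)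
    (hPbarsymm : ∀ i j, Pbar i j = Pbar j i)
    (PL : Fin (N + 1) → ℝ)
    -- generator data (generators at distinct buses are distinct)
    (G : Fin (N + 1) → Finset ℕ)
    (a b c Plow Pup : ℕ → ℝ)
    (ha : ∀ i, ∀ n ∈ G i, 0 < a n) (hlim : ∀ i, ∀ n ∈ G i, Plow n ≤ Pup n)
    -- the fixed point of the distributed algorithm
    (lam θ : Fin (N + 1) → ℝ) (μ : Fin (N + 1) → Fin (N + 1) → ℝ) (PG : ℕ → ℝ)
    (hfixLam : ∀ i, lam i = lam i
        - β * (lam i * (∑ j ∈ Ω i, 1 / X i j) - (∑ j ∈ Ω i, lam j / X i j)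
            + ∑ j ∈ Ω i, (μ i j - μ j i) / X i j)
        - α * ((∑ n ∈ G i, PG n) - PL i - ∑ j ∈ Ω i, (θ i - θ j) / X i j))
    (hfixPG : ∀ i, ∀ n ∈ G i,
        PG n = max (Plow n) (min (Pup n) ((lam i - b n) / (2 * a n))))
    (hfixTheta : ∀ i, θ i = θ i - γ * (-(∑ n ∈ G i, PG n) + PL i
        + ∑ j ∈ Ω i, (θ i - θ j) / X i j))
    (hfixMu : ∀ i, ∀ j ∈ Ω i,
        μ i j = max 0 (μ i j - δ * (Pbar i j - (θ i - θ j) / X i j))) :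
    DCOPF.Feasible N Ω X Pbar PL G Plow Pup PG (fun i => θ i - θ 0) ∧
    ∀ PG' θ', DCOPF.Feasible N Ω X Pbar PL G Plow Pup PG' θ' →
      DCOPF.cost N G a b c PG ≤ DCOPF.cost N G a b c PG' := by
  have hbal : ∀ i, (∑ n ∈ G i, PG n) - PL i = ∑ j ∈ Ω i, (θ i - θ j) / X i j := fun i => by
    linarith [eq_zero_of_eq_sub_mul hγ.ne' (hfixTheta i)]
  have hμ := fun i j hj => complementary_of_eq_max_zero_sub hδ (hfixMu i j hj)
  have hstat : ∀ i, ∑ j ∈ Ω i, (lam i - lam j + (μ i j - μ j i)) / X i j = 0 := fun i => by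
    have hi := hfixLam i
    rw [hbal i, sub_self, mul_zero, sub_zero] at hi
    rw [← eq_zero_of_eq_sub_mul hβ.ne' hi, mul_sum, ← sum_sub_distrib, ← sum_add_distrib]
    exact sum_congr rfl fun j _ => by ring
  refine ⟨DCOPF.feasible_sub_apply_zero hΩ hXsymm hPbarsymm hbal (fun i n hn => ?_)
    (fun i j hj => sub_nonneg.mp (hμ i j hj).2.1), fun PG' θ' => ?_⟩
  · rw [hfixPG i n hn]
    exact ⟨le_max_left _ _, max_le (hlim i n hn) (min_le_left _ _)⟩
  · exact DCOPF.cost_le_of_kkt hΩ hXsymm c ha hbal hfixPG (fun i j hj => (hμ i j hj).1)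
      (fun i j hj => (hμ i j hj).2.2) hstat

/-- Theorem 2: if the DC-OPF problem admits a strictly feasible point and
`(λ*, θ*, μ*, P*_G)` is a fixed point of the distributed DC-OPF algorithm,
then the primal variables `(P*_G, θ* − θ*₁·𝟙)` — the fixed-point generator
outputs together with the fixed-point angles shifted so that the slack-bus
angle is zero — form an optimal solution of the DC-OPF problem: they are
feasible, and their total generation cost is less than or equal to that of
every feasible point. -/
theorem fixed_point_is_optimal
    (N : ℕ) (α β γ δ : ℝ) (hα : 0 < α) (hβ : 0 < β) (hγ : 0 < γ) (hδ : 0 < δ)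
    -- network data
    (Ω : Fin (N + 1) → Finset (Fin (N + 1))) (hΩ : ∀ i j, j ∈ Ω i → i ∈ Ω j)
    (X : Fin (N + 1) → Fin (N + 1) → ℝ) (hXsymm : ∀ i j, X i j = X j i)
    (hXpos : ∀ i j, j ∈ Ω i → 0 < X i j)
    (Pbar : Fin (N + 1) → Fin (N + 1) → ℝ)
    (hPbarsymm : ∀ i j, Pbar i j = Pbar j i)
    (hPbarpos : ∀ i j, j ∈ Ω i → 0 < Pbar i j)
    (PL : Fin (N + 1) → ℝ)
    -- generator data (generators at distinct buses are distinct)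
    (G : Fin (N + 1) → Finset ℕ)
    (hGdisj : ∀ i j, i ≠ j → Disjoint (G i) (G j))
    (a b c Plow Pup : ℕ → ℝ)
    (ha : ∀ i, ∀ n ∈ G i, 0 < a n) (hlim : ∀ i, ∀ n ∈ G i, Plow n ≤ Pup n)
    -- strict feasibility of the DC-OPF problem
    (hslater : ∃ PG0 θ0,
        DCOPF.StrictFeasible N Ω X Pbar PL G Plow Pup PG0 θ0)
    -- the fixed point of the distributed algorithm
    (lam θ : Fin (N + 1) → ℝ) (μ : Fin (N + 1) → Fin (N + 1) → ℝ) (PG : ℕ → ℝ)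
    (hfixLam : ∀ i, lam i = lam i
        - β * (lam i * (∑ j ∈ Ω i, 1 / X i j) - (∑ j ∈ Ω i, lam j / X i j)
            + ∑ j ∈ Ω i, (μ i j - μ j i) / X i j)
        - α * ((∑ n ∈ G i, PG n) - PL i - ∑ j ∈ Ω i, (θ i - θ j) / X i j))
    (hfixPG : ∀ i, ∀ n ∈ G i,
        PG n = max (Plow n) (min (Pup n) ((lam i - b n) / (2 * a n))))
    (hfixTheta : ∀ i, θ i = θ i - γ * (-(∑ n ∈ G i, PG n) + PL i
        + ∑ j ∈ Ω i, (θ i - θ j) / X i j))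
    (hfixMu : ∀ i, ∀ j ∈ Ω i,
        μ i j = max 0 (μ i j - δ * (Pbar i j - (θ i - θ j) / X i j))) :
    DCOPF.Feasible N Ω X Pbar PL G Plow Pup PG (fun i => θ i - θ 0) ∧
    ∀ PG' θ', DCOPF.Feasible N Ω X Pbar PL G Plow Pup PG' θ' →
      DCOPF.cost N G a b c PG ≤ DCOPF.cost N G a b c PG' :=
  fixed_point_is_optimal_general N α β γ δ hβ hγ hδ Ω hΩ X hXsymm Pbar hPbarsymm PL G a b c Plow Pup
    ha hlim lam θ μ PG hfixLam hfixPG hfixTheta hfixMu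
end
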